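/- arXiv:2105.13927 — 3 statements merged into one kernel-verified Lean document; each statement's English description precedes it below -/
import Mathlib

section
/- For a dimension function Φ (i.e., Φ:(0,1)→ℝ⁺ with x^{1+Φ(x)} decreasing to 0 as x↓0) with Φ(x) ≤ C/|log x| for all 0 < x ≤ x₀ (some C, x₀ > 0), the upper Φ-dimension of any Borel probability measure μ on a bounded metric space equals its upper Assouad dimension dim_A μ. -/
/-!
If `Φ R ≤ C / |log R|`, then `R ^ (1 + Φ R)` and `R` differ by at most the factor `exp C`.
So a pair of radii `r < R` that is not covered by the `Φ`-condition (`R ^ (1 + Φ R) ≤ r < R`)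
can be handled with the admissible pair `R ^ (1 + Φ R) / 2 < R`, at the cost of the bounded
factor `(2 exp C) ^ d`. Conversely the Assouad condition covers every pair the `Φ`-condition does.
-/

open Set Metric MeasureTheory Filter

/-- A dimension function: `Φ : (0,1) → ℝ⁺` such that `x ^ (1 + Φ x)` decreases to `0`
as `x` decreases to `0`. -/
def IsDimFun (Φ : ℝ → ℝ) : Prop :=
  (∀ x ∈ Ioo (0:ℝ) 1, 0 < Φ x) ∧
  StrictMonoOn (fun x : ℝ => x ^ (1 + Φ x)) (Ioo (0:ℝ) 1) ∧
  Tendsto (fun x : ℝ => x ^ (1 + Φ x)) (nhdsWithin 0 (Ioo (0:ℝ) 1)) (nhds 0)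

/-- The upper `Φ`-dimension of a measure. -/
noncomputable def upperPhiDim {X : Type*} [MetricSpace X] [MeasurableSpace X] (Φ : ℝ → ℝ)
    (μ : Measure X) : ℝ :=
  sInf {d : ℝ | ∃ C₁ > (0:ℝ), ∃ C₂ > (0:ℝ), ∀ x : X, (∀ ε > (0:ℝ), 0 < μ (ball x ε)) →
    ∀ R r : ℝ, 0 < r → r < R ^ (1 + Φ R) → R ^ (1 + Φ R) ≤ R → R ≤ C₁ →
      (μ (ball x R)).toReal ≤ C₂ * (R / r) ^ d * (μ (ball x r)).toReal}

namespace Real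

theorem rpow_one_add_le_self {R t : ℝ} (hR₀ : 0 < R) (hR₁ : R ≤ 1) (ht : 0 ≤ t) :
    R ^ (1 + t) ≤ R := by
  rw [rpow_add hR₀, rpow_one]
  exact mul_le_of_le_one_right hR₀.le (rpow_le_one hR₀.le hR₁ ht)

theorem self_le_exp_mul_rpow_one_add {R t C : ℝ} (hR₀ : 0 < R) (hR₁ : R < 1)
    (ht : t ≤ C / |log R|) : R ≤ exp C * R ^ (1 + t) := by
  have hlog : 0 < |log R| := abs_pos.mpr (log_neg hR₀ hR₁).ne
  have hneg : R ^ (-t) ≤ exp C := by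
    rw [rpow_def_of_pos hR₀, exp_le_exp, abs_of_neg (log_neg hR₀ hR₁)] at *
    nlinarith [(le_div_iff₀ hlog).mp ht]
  calc R = R ^ (-t) * R ^ (1 + t) := by rw [← rpow_add hR₀]; simp
    _ ≤ exp C * R ^ (1 + t) := by gcongr

theorem rpow_le_max_one_rpow_mul_rpow {a b M : ℝ} (d : ℝ) (ha : 1 ≤ a) (hab : a ≤ b)
    (hbM : b ≤ M) : b ^ d ≤ max 1 (M ^ d) * a ^ d := by
  have ha₀ : 0 < a := zero_lt_one.trans_le ha
  rcases le_or_gt 0 d with hd | hd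
  · calc b ^ d ≤ M ^ d := rpow_le_rpow (ha₀.le.trans hab) hbM hd
      _ ≤ max 1 (M ^ d) * 1 := by rw [mul_one]; exact le_max_right _ _
      _ ≤ max 1 (M ^ d) * a ^ d := by gcongr; exact one_le_rpow ha hd
  · calc b ^ d ≤ a ^ d := rpow_le_rpow_of_nonpos ha₀ hab hd.le
      _ ≤ max 1 (M ^ d) * a ^ d :=
        le_mul_of_one_le_left (rpow_pos_of_pos ha₀ d).le (le_max_left _ _)

end Real

section

variable {X : Type*} [MetricSpace X] [MeasurableSpace X]

def IsUpperPhiDimBound (Φ : ℝ → ℝ) (μ : Measure X) (d : ℝ) : Prop :=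
  ∃ C₁ > (0:ℝ), ∃ C₂ > (0:ℝ), ∀ x : X, (∀ ε > (0:ℝ), 0 < μ (ball x ε)) →
    ∀ R r : ℝ, 0 < r → r < R ^ (1 + Φ R) → R ^ (1 + Φ R) ≤ R → R ≤ C₁ →
      (μ (ball x R)).toReal ≤ C₂ * (R / r) ^ d * (μ (ball x r)).toReal

theorem upperPhiDim_eq_sInf (Φ : ℝ → ℝ) (μ : Measure X) :
    upperPhiDim Φ μ = sInf {d | IsUpperPhiDimBound Φ μ d} := rfl

theorem IsUpperPhiDimBound.of_zero {μ : Measure X} {d : ℝ} (Φ : ℝ → ℝ)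
    (h : IsUpperPhiDimBound (fun _ => 0) μ d) : IsUpperPhiDimBound Φ μ d := by
  obtain ⟨C₁, hC₁, C₂, hC₂, h⟩ := h
  refine ⟨C₁, hC₁, C₂, hC₂, fun x hx R r hr hrR hRR hRC => ?_⟩
  simpa using h x hx R r hr (by simpa using hrR.trans_le hRR) (by simp) hRC

theorem IsUpperPhiDimBound.zero_of_le_mul_rpow {Φ : ℝ → ℝ} {μ : Measure X} [IsFiniteMeasure μ]
    {d ρ K : ℝ} (hρ : 0 < ρ)
    (hΦ : ∀ R, 0 < R → R ≤ ρ → R ^ (1 + Φ R) ≤ R ∧ R ≤ K * R ^ (1 + Φ R))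
    (h : IsUpperPhiDimBound Φ μ d) : IsUpperPhiDimBound (fun _ => 0) μ d := by
  obtain ⟨C₁, hC₁, C₂, hC₂, h⟩ := h
  set A := max 1 ((2 * K) ^ d)
  refine ⟨min C₁ ρ, lt_min hC₁ hρ, C₂ * A, by positivity, fun x hx R r hr hrR _ hRC => ?_⟩
  simp only [add_zero, Real.rpow_one] at hrR ⊢
  have hR₀ : 0 < R := hr.trans hrR
  obtain ⟨hRR, hRK⟩ := hΦ R hR₀ (hRC.trans (min_le_right _ _))
  have hRC₁ : R ≤ C₁ := hRC.trans (min_le_left _ _)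
  rcases lt_or_ge r (R ^ (1 + Φ R)) with hr' | hr'
  · calc (μ (ball x R)).toReal ≤ C₂ * (R / r) ^ d * (μ (ball x r)).toReal :=
          h x hx R r hr hr' hRR hRC₁
      _ ≤ C₂ * A * (R / r) ^ d * (μ (ball x r)).toReal := by
          rw [mul_assoc C₂ A]
          gcongr
          exact le_mul_of_one_le_left (by positivity) (le_max_left _ _)
  · set s := R ^ (1 + Φ R) / 2 with hs_def
    have hs : 0 < s := by positivity
    have hsr : s ≤ r := by linarith
    have hRs : R / s ≤ 2 * K := by
      rw [div_le_iff₀ hs, hs_def]; linarith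
    have hpow : (R / s) ^ d ≤ A * (R / r) ^ d :=
      Real.rpow_le_max_one_rpow_mul_rpow d ((one_le_div hr).mpr hrR.le)
        (div_le_div_of_nonneg_left hR₀.le hs hsr) hRs
    calc (μ (ball x R)).toReal ≤ C₂ * (R / s) ^ d * (μ (ball x s)).toReal :=
          h x hx R s hs (half_lt_self (by positivity)) hRR hRC₁
      _ ≤ C₂ * (A * (R / r) ^ d) * (μ (ball x r)).toReal := by
          gcongr
          exact measure_ne_top μ _
      _ = C₂ * A * (R / r) ^ d * (μ (ball x r)).toReal := by ring

end

theorem upperPhiDim_eq_assouad_of_le_div_neg_log_general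
    {X : Type*} [MetricSpace X] [MeasurableSpace X]
    (μ : Measure X) [IsProbabilityMeasure μ]
    (Φ : ℝ → ℝ) (hΦ : IsDimFun Φ)
    (C x₀ : ℝ) (hx₀ : 0 < x₀)
    (hle : ∀ x : ℝ, 0 < x → x ≤ x₀ → Φ x ≤ C / |Real.log x|) :
    upperPhiDim Φ μ = upperPhiDim (fun _ => 0) μ := by
  have hratio : ∀ R, 0 < R → R ≤ min x₀ (1 / 2) →
      R ^ (1 + Φ R) ≤ R ∧ R ≤ Real.exp C * R ^ (1 + Φ R) := by
    intro R hR₀ hR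
    have hR₁ : R < 1 := hR.trans_lt ((min_le_right _ _).trans_lt (by norm_num))
    exact ⟨Real.rpow_one_add_le_self hR₀ hR₁.le (hΦ.1 R ⟨hR₀, hR₁⟩).le,
      Real.self_le_exp_mul_rpow_one_add hR₀ hR₁ (hle R hR₀ (hR.trans (min_le_left _ _)))⟩
  rw [upperPhiDim_eq_sInf, upperPhiDim_eq_sInf]
  congr 1
  ext d
  exact ⟨IsUpperPhiDimBound.zero_of_le_mul_rpow (by positivity) hratio,
    IsUpperPhiDimBound.of_zero Φ⟩

/-- If `Φ(x) ≤ C/|log x|` for small `x`, then the upper `Φ`-dimension of any Borel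
probability measure on a bounded metric space equals its upper Assouad dimension
(the `Φ ≡ 0` case). -/
theorem upperPhiDim_eq_assouad_of_le_div_neg_log
    {X : Type*} [MetricSpace X] [MeasurableSpace X] [BorelSpace X]
    (hX : Bornology.IsBounded (univ : Set X))
    (μ : Measure X) [IsProbabilityMeasure μ]
    (Φ : ℝ → ℝ) (hΦ : IsDimFun Φ)
    (C x₀ : ℝ) (hC : 0 < C) (hx₀ : 0 < x₀)
    (hle : ∀ x : ℝ, 0 < x → x ≤ x₀ → Φ x ≤ C / |Real.log x|) :
    upperPhiDim Φ μ = upperPhiDim (fun _ => 0) μ :=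
  upperPhiDim_eq_assouad_of_le_div_neg_log_general μ Φ hΦ C x₀ hx₀ hle
end

section
/- If p = (p₁,…,p_T) is uniformly distributed on the probability simplex S_T (T ≥ 2), then E(−log min_k p_k) = log T + Σ_{k=1}^{T−1} 1/k. -/
/-!
Since `-log m = ∫_m^1 du / u` for `0 < m ≤ 1`, Tonelli gives
`E(-log min p) = ∫_0^1 P(min p ≤ u) du / u`. For `0 ≤ t < 1/T` the event `{min p > t}` is the
translate of `(1 - T t) • S_T` by `(t, …, t)`, so the scaling of `(T-1)`-dimensional Hausdorff
measure gives `P(min p > t) = (1 - T t)^(T-1)`; the normalization makes sense because dropping the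
last coordinate maps `S_T` bi-Lipschitz onto an open bounded subset of `ℝ^(T-1)`. After the
substitution `v = T u` the integral splits into `∫_1^T dv / v = log T` and
`∫_0^1 (1 - (1 - v)^(T-1)) / v dv = Σ_{k=1}^{T-1} 1/k` (a geometric sum).
-/

open MeasureTheory Set

/-- The open probability simplex `S_T = {x : xᵢ > 0, Σ xᵢ = 1}` in `ℝ^T`. -/
def probSimplex (T : ℕ) : Set (EuclideanSpace ℝ (Fin T)) :=
  {x | (∀ i, 0 < x i) ∧ ∑ i, x i = 1}

/-- The uniform probability distribution on the simplex `S_T`: normalized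
`(T-1)`-dimensional Hausdorff measure restricted to `S_T`. -/
noncomputable def simplexUniform (T : ℕ) : Measure (EuclideanSpace ℝ (Fin T)) :=
  (μH[(T:ℝ) - 1] (probSimplex T))⁻¹ • (μH[(T:ℝ) - 1]).restrict (probSimplex T)

open ProbabilityTheory intervalIntegral
open scoped ENNReal Pointwise Interval

theorem lt_ciInf_iff_of_finite {ι α : Type*} [ConditionallyCompleteLinearOrder α] [Finite ι]
    [Nonempty ι] {f : ι → α} {a : α} : a < ⨅ i, f i ↔ ∀ i, a < f i := by
  obtain ⟨i, hi⟩ := exists_eq_ciInf_of_finite (f := f)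
  exact ⟨fun h j => h.trans_le (ciInf_le (Finite.bddBelow_range f) j), fun h => hi ▸ h i⟩

theorem setLIntegral_Ioc_ite_inv {a : ℝ} (ha0 : 0 < a) (ha1 : a ≤ 1) :
    ∫⁻ u in Ioc 0 1, (if a ≤ u then ENNReal.ofReal u⁻¹ else 0) =
      ENNReal.ofReal (-Real.log a) := by
  have hset : Ici a ∩ Ioc 0 1 = Icc a 1 := by
    ext u
    simp only [mem_inter_iff, mem_Ici, mem_Ioc, mem_Icc]
    exact ⟨fun h => ⟨h.1, h.2.2⟩, fun h => ⟨h.1, ha0.trans_le h.1, h.2⟩⟩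
  have hcont : ContinuousOn (fun u : ℝ => u⁻¹) (Icc a 1) :=
    continuousOn_inv₀.mono fun u hu => (ha0.trans_le hu.1).ne'
  have hnonneg : 0 ≤ᵐ[volume.restrict (Icc a 1)] fun u : ℝ => u⁻¹ :=
    (ae_restrict_iff' measurableSet_Icc).2
      (ae_of_all _ fun u hu => inv_nonneg.2 (ha0.le.trans hu.1))
  have hind : ∀ u, (if a ≤ u then ENNReal.ofReal u⁻¹ else 0) =
      (Ici a).indicator (fun u => ENNReal.ofReal u⁻¹) u := fun u => by simp [indicator_apply]
  simp_rw [hind]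
  rw [lintegral_indicator measurableSet_Ici, Measure.restrict_restrict measurableSet_Ici, hset,
    ← ofReal_integral_eq_lintegral_ofReal hcont.integrableOn_Icc hnonneg,
    integral_Icc_eq_integral_Ioc, ← intervalIntegral.integral_of_le ha1,
    integral_inv_of_pos ha0 one_pos, one_div, Real.log_inv]

theorem lintegral_ofReal_neg_log_eq_lintegral_meas_le {α : Type*} [MeasurableSpace α]
    (μ : Measure α) [SFinite μ] {f : α → ℝ} (hf : Measurable f)
    (hf01 : ∀ᵐ x ∂μ, f x ∈ Ioc 0 1) :
    ∫⁻ x, ENNReal.ofReal (-Real.log (f x)) ∂μ =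
      ∫⁻ u in Ioc (0 : ℝ) 1, μ {x | f x ≤ u} * ENNReal.ofReal u⁻¹ := by
  calc ∫⁻ x, ENNReal.ofReal (-Real.log (f x)) ∂μ
      = ∫⁻ x, (∫⁻ u in Ioc (0 : ℝ) 1,
          if f x ≤ u then ENNReal.ofReal u⁻¹ else 0) ∂μ :=
        lintegral_congr_ae (hf01.mono fun x hx => (setLIntegral_Ioc_ite_inv hx.1 hx.2).symm)
    _ = ∫⁻ u in Ioc (0 : ℝ) 1,
          ∫⁻ x, (if f x ≤ u then ENNReal.ofReal u⁻¹ else 0) ∂μ := by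
        refine lintegral_lintegral_swap (Measurable.aemeasurable ?_)
        exact Measurable.ite (measurableSet_le (hf.comp measurable_fst) measurable_snd)
          (ENNReal.measurable_ofReal.comp measurable_snd.inv) measurable_const
    _ = ∫⁻ u in Ioc (0 : ℝ) 1, μ {x | f x ≤ u} * ENNReal.ofReal u⁻¹ := by
        congr 1 with u
        rw [mul_comm, ← lintegral_indicator_const (measurableSet_le hf measurable_const)]
        rfl

theorem one_sub_one_sub_pow_div_eq_geom_sum (n : ℕ) {v : ℝ} (hv : v ≠ 0) :
    (1 - (1 - v) ^ n) / v = ∑ k ∈ Finset.range n, (1 - v) ^ k := by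
  rw [div_eq_iff hv]
  linear_combination geom_sum_mul (1 - v) n

theorem eqOn_one_sub_one_sub_pow_div_geom_sum (n : ℕ) :
    EqOn (fun v : ℝ => (1 - (1 - v) ^ n) / v) (fun v => ∑ k ∈ Finset.range n, (1 - v) ^ k)
      (Ι 0 1) :=
  fun _ hv => one_sub_one_sub_pow_div_eq_geom_sum n
    (by rw [uIoc_of_le zero_le_one] at hv; exact hv.1.ne')

theorem intervalIntegrable_one_sub_one_sub_pow_div (n : ℕ) :
    IntervalIntegrable (fun v : ℝ => (1 - (1 - v) ^ n) / v) volume 0 1 :=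
  (intervalIntegrable_congr (eqOn_one_sub_one_sub_pow_div_geom_sum n)).2
    (Continuous.intervalIntegrable (by fun_prop) 0 1)

theorem integral_one_sub_one_sub_pow_div (n : ℕ) :
    ∫ v in 0..1, (1 - (1 - v) ^ n) / v = ∑ k ∈ Finset.Icc 1 n, (1 : ℝ) / k := by
  calc ∫ v in 0..1, (1 - (1 - v) ^ n) / v
      = ∫ v in 0..1, ∑ k ∈ Finset.range n, (1 - v) ^ k :=
        integral_congr_ae (ae_of_all _ fun _ hv => eqOn_one_sub_one_sub_pow_div_geom_sum n hv)
    _ = ∑ k ∈ Finset.range n, (1 : ℝ) / (k + 1) := by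
        rw [intervalIntegral.integral_finsetSum fun k _ =>
          (by fun_prop : Continuous fun v : ℝ => (1 - v) ^ k).intervalIntegrable 0 1]
        congr 1 with k
        rw [integral_comp_sub_left (fun x => x ^ k)]
        simp
    _ = ∑ k ∈ Finset.Icc 1 n, (1 : ℝ) / k := by
        simpa [harmonic] using congrArg (fun q : ℚ => (q : ℝ)) (harmonic_eq_sum_Icc (n := n))

theorem integral_one_sub_max_pow_div {n : ℕ} (hn : n ≠ 0) :
    ∫ u in 0..1, (1 - max (1 - (n + 1) * u) 0 ^ n) / u =
      Real.log (n + 1) + ∑ k ∈ Finset.Icc 1 n, (1 : ℝ) / k := by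
  set c : ℝ := n + 1
  have hc1 : 1 ≤ c := le_add_of_nonneg_left n.cast_nonneg
  have hc0 : c ≠ 0 := by positivity
  set h : ℝ → ℝ := fun v => (1 - max (1 - v) 0 ^ n) / v
  have h_left : EqOn h (fun v => (1 - (1 - v) ^ n) / v) (uIcc 0 1) := fun v hv => by
    rw [uIcc_of_le zero_le_one] at hv
    simp [h, max_eq_left (sub_nonneg.2 hv.2)]
  have h_right : EqOn h (fun v => v⁻¹) (uIcc 1 c) := fun v hv => by
    rw [uIcc_of_le hc1] at hv
    simp [h, max_eq_right (sub_nonpos.2 hv.1), hn]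
  have hcont : ContinuousOn (fun v : ℝ => v⁻¹) (uIcc 1 c) := by
    rw [uIcc_of_le hc1]
    exact continuousOn_inv₀.mono fun v hv => (zero_lt_one.trans_le hv.1).ne'
  calc ∫ u in 0..1, (1 - max (1 - c * u) 0 ^ n) / u
      = ∫ u in 0..1, c * h (c * u) := by
        congr 1 with u
        simp only [h, mul_div_assoc', mul_div_mul_left _ _ hc0]
    _ = ∫ v in 0..c, h v := by
        rw [intervalIntegral.integral_const_mul, integral_comp_mul_left h hc0, smul_eq_mul,
          mul_zero, mul_one, mul_inv_cancel_left₀ hc0]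
    _ = (∫ v in 0..1, h v) + ∫ v in 1..c, h v :=
        (integral_add_adjacent_intervals
          ((intervalIntegrable_one_sub_one_sub_pow_div n).congr
            (h_left.symm.mono uIoc_subset_uIcc))
          (hcont.intervalIntegrable.congr (h_right.symm.mono uIoc_subset_uIcc))).symm
    _ = Real.log c + ∑ k ∈ Finset.Icc 1 n, (1 : ℝ) / k := by
        rw [integral_congr h_left, integral_one_sub_one_sub_pow_div, integral_congr h_right,
          integral_inv_of_pos one_pos (by linarith), div_one, add_comm]

variable {N n : ℕ}

theorem measurable_iInf_apply : Measurable fun x : EuclideanSpace ℝ (Fin N) => ⨅ k, x k := by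
  fun_prop

theorem measurableSet_probSimplex : MeasurableSet (probSimplex N) := by
  unfold probSimplex
  measurability

theorem card_mul_iInf_le_one {x : EuclideanSpace ℝ (Fin N)} (hx : x ∈ probSimplex N) :
    (N : ℝ) * ⨅ k, x k ≤ 1 := by
  simpa [hx.2] using Finset.card_nsmul_le_sum Finset.univ (fun k => x k) _
    fun k _ => ciInf_le (Finite.bddBelow_range _) k

def cornerSimplex (n : ℕ) : Set (Fin n → ℝ) := {y | (∀ i, 0 < y i) ∧ ∑ i, y i < 1}

theorem isOpen_cornerSimplex : IsOpen (cornerSimplex n) := by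
  simp only [cornerSimplex, ofPred_and, ofPred_forall]
  exact (isOpen_iInter_of_finite fun i => isOpen_lt continuous_const (continuous_apply i)).inter
    (isOpen_lt (by fun_prop) continuous_const)

theorem cornerSimplex_nonempty : (cornerSimplex n).Nonempty := by
  refine ⟨fun _ => 1 / (n + 1), fun _ => by positivity, ?_⟩
  simp only [Finset.sum_const, Finset.card_univ, Fintype.card_fin, nsmul_eq_mul]
  rw [mul_one_div, div_lt_one (by positivity)]
  linarith

theorem cornerSimplex_subset_Icc : cornerSimplex n ⊆ Icc 0 1 :=
  fun _ hy => ⟨fun i => (hy.1 i).le, fun i =>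
    ((Finset.single_le_sum (fun j _ => (hy.1 j).le) (Finset.mem_univ i)).trans hy.2.le)⟩

noncomputable def dropLast (n : ℕ) : EuclideanSpace ℝ (Fin (n + 1)) →L[ℝ] (Fin n → ℝ) :=
  ContinuousLinearMap.pi fun j => EuclideanSpace.proj j.castSucc

noncomputable def extendLast (n : ℕ) :
    (Fin n → ℝ) →L[ℝ] EuclideanSpace ℝ (Fin (n + 1)) :=
  (EuclideanSpace.equiv (Fin (n + 1)) ℝ).symm.toContinuousLinearMap ∘L
    ContinuousLinearMap.pi
      (Fin.lastCases (-∑ j, ContinuousLinearMap.proj j) ContinuousLinearMap.proj)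

theorem dropLast_apply (x : EuclideanSpace ℝ (Fin (n + 1))) (j : Fin n) :
    dropLast n x j = x j.castSucc := rfl

theorem extendLast_apply_castSucc (y : Fin n → ℝ) (j : Fin n) :
    extendLast n y j.castSucc = y j := by
  simp [extendLast]

theorem extendLast_apply_last (y : Fin n → ℝ) : extendLast n y (Fin.last n) = -∑ j, y j := by
  simp [extendLast]

theorem probSimplex_eq_vadd_image :
    probSimplex (n + 1) =
      EuclideanSpace.single (Fin.last n) (1 : ℝ) +ᵥ extendLast n '' cornerSimplex n := by
  ext x
  simp only [mem_vadd_set, mem_image, probSimplex, cornerSimplex, mem_ofPred_eq, vadd_eq_add]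
  constructor
  · rintro ⟨hpos, hsum⟩
    rw [Fin.sum_univ_castSucc] at hsum
    have hlow : ∑ j, dropLast n x j < 1 := by
      simp only [dropLast_apply]
      linarith [hpos (Fin.last n)]
    refine ⟨_, ⟨dropLast n x, ⟨fun j => hpos _, hlow⟩, rfl⟩, ?_⟩
    ext i
    induction i using Fin.lastCases with
    | last =>
      simp only [PiLp.add_apply, PiLp.single_eq_same, extendLast_apply_last, dropLast_apply]
      linarith
    | cast j => simp [extendLast_apply_castSucc, dropLast_apply]
  · rintro ⟨_, ⟨y, ⟨hpos, hsum⟩, rfl⟩, rfl⟩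
    refine ⟨fun i => ?_, ?_⟩
    · induction i using Fin.lastCases with
      | last =>
        simp only [PiLp.add_apply, PiLp.single_eq_same, extendLast_apply_last]
        linarith
      | cast j => simpa [extendLast_apply_castSucc] using hpos j
    · simp [Fin.sum_univ_castSucc, extendLast_apply_castSucc, extendLast_apply_last]

theorem dropLast_image_probSimplex : dropLast n '' probSimplex (n + 1) = cornerSimplex n := by
  rw [probSimplex_eq_vadd_image, ← image_vadd, image_image, image_image]
  convert image_id (cornerSimplex n) using 2 with y
  ext j
  simp [dropLast_apply, extendLast_apply_castSucc]

theorem hausdorffMeasure_fin_eq_volume : (μH[n] : Measure (Fin n → ℝ)) = volume := by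
  simpa using hausdorffMeasure_pi_real (ι := Fin n)

theorem hausdorffMeasure_probSimplex_lt_top : μH[n] (probSimplex (n + 1)) < ∞ := by
  rw [probSimplex_eq_vadd_image, hausdorffMeasure_vadd _ (Or.inl n.cast_nonneg)]
  calc μH[n] (extendLast n '' cornerSimplex n)
      ≤ (‖extendLast n‖₊ : ℝ≥0∞) ^ (n : ℝ) * μH[n] (cornerSimplex n) :=
        (extendLast n).lipschitz.hausdorffMeasure_image_le n.cast_nonneg _
    _ < ∞ := by
        rw [hausdorffMeasure_fin_eq_volume]
        exact ENNReal.mul_lt_top (by finiteness)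
          ((Metric.isBounded_Icc (0 : Fin n → ℝ) 1).subset
            cornerSimplex_subset_Icc).measure_lt_top

theorem hausdorffMeasure_probSimplex_pos : 0 < μH[n] (probSimplex (n + 1)) := by
  have h := (dropLast n).lipschitz.hausdorffMeasure_image_le n.cast_nonneg (probSimplex (n + 1))
  rw [dropLast_image_probSimplex, hausdorffMeasure_fin_eq_volume] at h
  refine pos_iff_ne_zero.2 fun h0 => ?_
  rw [h0, mul_zero, nonpos_iff_eq_zero] at h
  exact (isOpen_cornerSimplex.measure_pos volume cornerSimplex_nonempty).ne' h

theorem sep_probSimplex_forall_lt {t : ℝ} (ht0 : 0 ≤ t) (ht : N * t < 1) :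
    {x ∈ probSimplex N | ∀ k, t < x k} =
      WithLp.toLp 2 (fun _ : Fin N => t) +ᵥ (1 - N * t) • probSimplex N := by
  have hr : 0 < 1 - N * t := by linarith
  ext x
  simp only [Set.mem_vadd_set, Set.mem_smul_set, probSimplex, Set.mem_ofPred_eq, vadd_eq_add]
  constructor
  · rintro ⟨⟨-, hsum⟩, hlt⟩
    refine ⟨_, ⟨(1 - N * t)⁻¹ • (x - WithLp.toLp 2 (fun _ : Fin N => t)),
      ⟨fun i => ?_, ?_⟩, rfl⟩, ?_⟩
    · simpa using mul_pos (inv_pos.2 hr) (sub_pos.2 (hlt i))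
    · simp [← Finset.mul_sum, hsum, hr.ne']
    · ext i
      simp [hr.ne']
  · rintro ⟨_, ⟨y, ⟨hpos, hsum⟩, rfl⟩, rfl⟩
    have hlt : ∀ i, t < t + (1 - N * t) * y i := fun i => by nlinarith [hpos i]
    refine ⟨⟨fun i => ?_, ?_⟩, fun i => ?_⟩
    · simpa using ht0.trans_lt (hlt i)
    · simp [Finset.sum_add_distrib, ← Finset.mul_sum, hsum]
    · simpa using hlt i

theorem hausdorffMeasure_sep_probSimplex_forall_lt {t : ℝ} (ht0 : 0 ≤ t)
    (ht : ((n : ℝ) + 1) * t < 1) :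
    μH[n] {x ∈ probSimplex (n + 1) | ∀ k, t < x k} =
      ENNReal.ofReal ((1 - ((n : ℝ) + 1) * t) ^ n) * μH[n] (probSimplex (n + 1)) := by
  have hr : 0 < 1 - ((n : ℝ) + 1) * t := by linarith
  rw [sep_probSimplex_forall_lt ht0 (by push_cast; exact ht),
    hausdorffMeasure_vadd _ (Or.inl n.cast_nonneg),
    Measure.hausdorffMeasure_smul₀ n.cast_nonneg (by push_cast; exact hr.ne'), ENNReal.smul_def,
    smul_eq_mul, NNReal.rpow_natCast, Real.nnnorm_of_nonneg (by push_cast; exact hr.le)]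
  push_cast
  rw [ENNReal.ofReal_pow hr.le, ENNReal.ofReal_eq_coe_nnreal hr.le]

theorem simplexUniform_succ : simplexUniform (n + 1) = μH[n][|probSimplex (n + 1)] := by
  simp [simplexUniform, ProbabilityTheory.cond]

theorem isProbabilityMeasure_simplexUniform : IsProbabilityMeasure (simplexUniform (n + 1)) := by
  rw [simplexUniform_succ]
  exact cond_isProbabilityMeasure_of_finite hausdorffMeasure_probSimplex_pos.ne'
    hausdorffMeasure_probSimplex_lt_top.ne

theorem ae_iInf_mem_Ioc : ∀ᵐ x ∂simplexUniform (n + 1), ⨅ k, x k ∈ Ioc 0 1 := by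
  rw [simplexUniform_succ]
  refine ae_cond_of_forall_mem measurableSet_probSimplex fun x hx => ?_
  have hpos := lt_ciInf_iff_of_finite.2 hx.1
  have hle := card_mul_iInf_le_one hx
  push_cast at hle
  exact ⟨hpos, by nlinarith⟩

theorem simplexUniform_setOf_lt_iInf (hn : n ≠ 0) {t : ℝ} (ht : 0 ≤ t) :
    simplexUniform (n + 1) {x | t < ⨅ k, x k} = ENNReal.ofReal (max (1 - (n + 1) * t) 0 ^ n) := by
  rw [simplexUniform_succ, cond_apply measurableSet_probSimplex]
  rcases lt_or_ge (((n : ℝ) + 1) * t) 1 with hlt | hge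
  · have hset : probSimplex (n + 1) ∩ {x | t < ⨅ k, x k} =
        {x ∈ probSimplex (n + 1) | ∀ k, t < x k} := by
      ext x
      simp [lt_ciInf_iff_of_finite]
    rw [hset, hausdorffMeasure_sep_probSimplex_forall_lt ht hlt, max_eq_left (by linarith),
      mul_left_comm, ENNReal.inv_mul_cancel hausdorffMeasure_probSimplex_pos.ne'
        hausdorffMeasure_probSimplex_lt_top.ne, mul_one]
  · have hset : probSimplex (n + 1) ∩ {x | t < ⨅ k, x k} = ∅ := by
      refine eq_empty_of_forall_notMem fun x ⟨hx, (hlt : t < ⨅ k, x k)⟩ => ?_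
      have hle := card_mul_iInf_le_one hx
      push_cast at hle
      linarith [mul_lt_mul_of_pos_left hlt (by positivity : (0 : ℝ) < n + 1)]
    rw [hset, measure_empty, mul_zero, max_eq_right (by linarith), zero_pow hn, ENNReal.ofReal_zero]

theorem simplexUniform_setOf_iInf_le (hn : n ≠ 0) {u : ℝ} (hu : 0 ≤ u) :
    simplexUniform (n + 1) {x | ⨅ k, x k ≤ u} =
      ENNReal.ofReal (1 - max (1 - (n + 1) * u) 0 ^ n) := by
  have := isProbabilityMeasure_simplexUniform (n := n)
  have hcompl :
      {x : EuclideanSpace ℝ (Fin (n + 1)) | ⨅ k, x k ≤ u} = {x | u < ⨅ k, x k}ᶜ := by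
    ext
    simp
  rw [hcompl, prob_compl_eq_one_sub (measurableSet_lt measurable_const measurable_iInf_apply),
    simplexUniform_setOf_lt_iInf hn hu, ENNReal.ofReal_sub _ (by positivity), ENNReal.ofReal_one]

theorem setLIntegral_simplexUniform_setOf_iInf_le_mul_inv (hn : n ≠ 0) :
    ∫⁻ u in Ioc (0 : ℝ) 1,
        simplexUniform (n + 1) {x | ⨅ k, x k ≤ u} * ENNReal.ofReal u⁻¹ =
      ENNReal.ofReal (Real.log (n + 1) + ∑ k ∈ Finset.Icc 1 n, (1 : ℝ) / k) := by
  set F : ℝ → ℝ := fun u => (1 - max (1 - (n + 1) * u) 0 ^ n) / u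
  have hF : ∀ u ∈ Ioc (0 : ℝ) 1, 0 ≤ F u := fun u hu =>
    div_nonneg (sub_nonneg.2 (pow_le_one₀ (le_max_right _ _)
      (max_le (by nlinarith [hu.1]) zero_le_one))) hu.1.le
  have hcdf : ∀ u ∈ Ioc (0 : ℝ) 1,
      simplexUniform (n + 1) {x | ⨅ k, x k ≤ u} * ENNReal.ofReal u⁻¹ =
        ENNReal.ofReal (F u) :=
    fun u hu => by
      rw [simplexUniform_setOf_iInf_le hn hu.1.le, ← ENNReal.ofReal_mul' (inv_nonneg.2 hu.1.le)]
      rfl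
  -- a function that is not integrable has integral `0`
  have hint : IntervalIntegrable F volume 0 1 := by
    refine intervalIntegrable_of_integral_ne_zero (ne_of_gt ?_)
    rw [integral_one_sub_max_pow_div hn]
    exact add_pos_of_pos_of_nonneg (Real.log_pos (by simpa using Nat.pos_of_ne_zero hn))
      (Finset.sum_nonneg fun _ _ => by positivity)
  rw [setLIntegral_congr_fun measurableSet_Ioc hcdf, ← integral_one_sub_max_pow_div hn,
    intervalIntegral.integral_of_le zero_le_one,
    ofReal_integral_eq_lintegral_ofReal ((intervalIntegrable_iff_integrableOn_Ioc_of_le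
      zero_le_one).1 hint) ((ae_restrict_iff' measurableSet_Ioc).2 (ae_of_all _ hF))]

/-- If `p` is uniformly distributed on the simplex `S_T` (`T ≥ 2`), then
`E(−log min_k p_k) = log T + Σ_{k=1}^{T−1} 1/k`. -/
theorem simplexUniform_expect_neg_log_min (T : ℕ) (hT : 2 ≤ T) :
    ∫ x, (-Real.log (⨅ k, x k)) ∂(simplexUniform T) =
      Real.log T + ∑ k ∈ Finset.Icc 1 (T - 1), (1 : ℝ) / k := by
  obtain ⟨n, hn, rfl⟩ : ∃ n, n ≠ 0 ∧ T = n + 1 := ⟨T - 1, by omega, by omega⟩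
  have := isProbabilityMeasure_simplexUniform (n := n)
  have hmin := ae_iInf_mem_Ioc (n := n)
  rw [integral_eq_lintegral_of_nonneg_ae
      (hmin.mono fun x hx => neg_nonneg.2 (Real.log_nonpos hx.1.le hx.2))
      measurable_iInf_apply.log.neg.aestronglyMeasurable,
    lintegral_ofReal_neg_log_eq_lintegral_meas_le _ measurable_iInf_apply hmin,
    setLIntegral_simplexUniform_setOf_iInf_le_mul_inv hn, ENNReal.toReal_ofReal
      (add_nonneg (Real.log_nonneg (by simp)) (Finset.sum_nonneg fun _ _ => by positivity))]
  simp
end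

section
/- For every integer n ≥ 0, Σ_{k=0}^{n} (−1)^k C(n,k)/(k+1)² = (1/(n+1)) · Σ_{k=0}^{n} 1/(k+1). -/
/-!
Absorbing one factor `k + 1` via `C(n, k) / (k + 1) = C(n + 1, k + 1) / (n + 1)` turns the sum into
`1 / (n + 1)` times `∑_{k < n + 1} (-1)^k C(n + 1, k + 1) / (k + 1)`, and this alternating sum is the
harmonic number `H_{n + 1}`: Pascal's rule increases it by `∑_k (-1)^k C(m, k) / (k + 1) = 1 / (m + 1)`
when `m` becomes `m + 1`.
-/

open Finset

theorem sum_range_alternating_choose_succ {R : Type*} [CommRing R] (m : ℕ) :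
    ∑ k ∈ range (m + 1), (-1 : R) ^ k * (m + 1).choose (k + 1) = 1 := by
  have h := Int.alternating_sum_range_choose_of_ne (Nat.succ_ne_zero m)
  rw [sum_range_succ'] at h
  have h' : ∑ k ∈ range (m + 1), (-1 : ℤ) ^ k * (m + 1).choose (k + 1) = 1 := by
    simp only [pow_succ, mul_neg_one, neg_mul, sum_neg_distrib, pow_zero, Nat.choose_zero_right,
      Nat.cast_one, mul_one] at h
    linarith
  exact_mod_cast congrArg (Int.cast : ℤ → R) h'

section Field

variable {K : Type*} [Field K] [CharZero K]

theorem cast_choose_div_add_one (n k : ℕ) :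
    (n.choose k : K) / (k + 1) = (n + 1).choose (k + 1) / (n + 1) := by
  rw [div_eq_div_iff (Nat.cast_add_one_ne_zero k) (Nat.cast_add_one_ne_zero n)]
  exact_mod_cast (mul_comm _ _).trans (Nat.add_one_mul_choose_eq n k)

theorem sum_range_alternating_choose_div_add_one (m : ℕ) :
    ∑ k ∈ range (m + 1), (-1 : K) ^ k * m.choose k / (k + 1) = 1 / (m + 1) := by
  simp_rw [mul_div_assoc, cast_choose_div_add_one, ← mul_div_assoc, ← sum_div]
  rw [sum_range_alternating_choose_succ]

theorem sum_range_alternating_choose_succ_div_add_one (m : ℕ) :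
    ∑ k ∈ range m, (-1 : K) ^ k * m.choose (k + 1) / (k + 1) = ∑ k ∈ range m, 1 / ((k : K) + 1) := by
  induction m with
  | zero => simp
  | succ m ih =>
    have pascal : ∀ k : ℕ, (-1 : K) ^ k * (m + 1).choose (k + 1) / (k + 1) =
        (-1 : K) ^ k * m.choose k / (k + 1) + (-1 : K) ^ k * m.choose (k + 1) / (k + 1) := by
      intro k
      rw [Nat.choose_succ_succ', Nat.cast_add]
      ring
    simp_rw [pascal, sum_add_distrib, sum_range_alternating_choose_div_add_one]
    rw [sum_range_succ _ m, Nat.choose_succ_self, ih, sum_range_succ]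
    simp only [Nat.cast_zero, mul_zero, zero_div, add_zero]
    ring

end Field

/-- `Σ_{k=0}^{n} (−1)^k C(n,k)/(k+1)² = (1/(n+1)) Σ_{k=0}^{n} 1/(k+1)`. -/
theorem alternating_binom_div_succ_sq (n : ℕ) :
    ∑ k ∈ Finset.range (n + 1), (-1 : ℝ) ^ k * (n.choose k) / (k + 1) ^ 2 =
      (1 / (n + 1)) * ∑ k ∈ Finset.range (n + 1), (1 : ℝ) / (k + 1) := by
  have absorb : ∀ k : ℕ, (-1 : ℝ) ^ k * n.choose k / (k + 1) ^ 2 =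
      1 / (n + 1) * ((-1 : ℝ) ^ k * (n + 1).choose (k + 1) / (k + 1)) := by
    intro k
    rw [pow_two, ← div_div, mul_div_assoc, cast_choose_div_add_one]
    ring
  simp_rw [absorb, ← mul_sum]
  rw [sum_range_alternating_choose_succ_div_add_one]
end
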